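/- arXiv:2211.11037 — 2 statements merged into one kernel-verified Lean document; each statement's English description precedes it below -/
import Mathlib

section
/- For all integers n ≥ 1 and d ≥ 1, the integer (n+1)d² divides ∑_{k ∣ d} μ(k) · (−1)^{n·(d/k)} · C((n+1)d/k, d/k), where the sum runs over the positive divisors k of d. -/
open Finset

lemma kp_prod_multiples (p e : ℕ) (hp : 0 < p) (hpe : p ∣ e) (f : ℕ → ℕ) :
    ∏ i ∈ (Finset.Ico 1 e).filter (fun i => p ∣ i), f i = ∏ j ∈ Finset.Ico 1 (e/p), f (p*j) := by
  refine (Finset.prod_nbij' (fun i => i / p) (fun j => p * j) ?_ ?_ ?_ ?_ ?_).symm.symm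
  · intro a ha
    simp only [mem_filter, mem_Ico] at ha
    obtain ⟨⟨h1, h2⟩, c, rfl⟩ := ha
    simp only [mem_Ico]
    constructor
    · exact Nat.one_le_div_iff hp |>.2 (Nat.le_of_dvd (by omega) ⟨c, rfl⟩)
    · exact Nat.div_lt_div_of_lt_of_dvd hpe h2
  · intro j hj
    simp only [mem_Ico] at hj
    simp only [mem_filter, mem_Ico]
    refine ⟨⟨by nlinarith [hj.1], ?_⟩, ⟨j, rfl⟩⟩
    calc p * j < p * (e/p) := by exact (Nat.mul_lt_mul_left hp).2 hj.2
    _ = e := Nat.mul_div_cancel' hpe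
  · intro a ha
    simp only [mem_filter] at ha
    exact Nat.mul_div_cancel' ha.2
  · intro j hj
    exact Nat.mul_div_cancel_left j hp
  · intro a ha
    simp only [mem_filter] at ha
    rw [Nat.mul_div_cancel' ha.2]

lemma kp_L1 (p m e : ℕ) (hp : p.Prime) (hm : 1 ≤ m) (hpe : p ∣ e) (he : 0 < e) :
    ((m*e - 1).choose (e-1)) * ∏ i ∈ (Finset.Ico 1 e).filter (fun i => ¬ p ∣ i), i
  = ((m*(e/p) - 1).choose (e/p - 1)) * ∏ i ∈ (Finset.Ico 1 e).filter (fun i => ¬ p ∣ i), (m*e - i) := by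
  set e' := e / p with he'
  have hpp : 0 < p := hp.pos
  have hee : e = p * e' := (Nat.mul_div_cancel' hpe).symm
  have he1 : 1 ≤ e' := Nat.one_le_div_iff hpp |>.2 (Nat.le_of_dvd he hpe)
  -- descending factorial products
  have hdesc : ∀ M k : ℕ, ∏ i ∈ Finset.Ico 1 (k+1), (M - i) = Nat.descFactorial (M - 1) k := by
    intro M k
    rw [Nat.descFactorial_eq_prod_range, Finset.prod_Ico_eq_prod_range]
    simp only [Nat.add_sub_cancel]
    refine Finset.prod_congr rfl fun i _ => by omega
  have hfact : ∀ k : ℕ, ∏ i ∈ Finset.Ico 1 (k+1), i = Nat.factorial k := by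
    intro k
    exact Finset.prod_Ico_id_eq_factorial k
  -- split of full product over Ico 1 e
  have hsplit : ∀ f : ℕ → ℕ, ∏ i ∈ Finset.Ico 1 e, f i
      = (∏ i ∈ (Finset.Ico 1 e).filter (fun i => ¬ p ∣ i), f i) * ∏ j ∈ Finset.Ico 1 e', f (p*j) := by
    intro f
    rw [← kp_prod_multiples p e hpp hpe f, mul_comm,
      Finset.prod_filter_mul_prod_filter_not]
  have hcard : (Finset.Ico 1 e').card = e' - 1 := Nat.card_Ico 1 e'
  -- numerator split
  have hnum : Nat.descFactorial (m*e - 1) (e-1)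
      = (∏ i ∈ (Finset.Ico 1 e).filter (fun i => ¬ p ∣ i), (m*e - i)) *
        (p^(e'-1) * Nat.descFactorial (m*e' - 1) (e'-1)) := by
    have h1 : ∏ i ∈ Finset.Ico 1 e, (m*e - i) = Nat.descFactorial (m*e - 1) (e-1) := by
      have := hdesc (m*e) (e-1)
      rwa [show e - 1 + 1 = e by omega] at this
    rw [← h1, hsplit (fun i => m*e - i)]
    congr 1
    have h2 : ∀ j ∈ Finset.Ico 1 e', m*e - p*j = p * (m*e' - j) := by
      intro j _
      rw [Nat.mul_sub, hee]; ring_nf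
    rw [Finset.prod_congr rfl h2, Finset.prod_mul_distrib, Finset.prod_const, hcard]
    congr 1
    have := hdesc (m*e') (e'-1)
    rwa [show e' - 1 + 1 = e' by omega] at this
  -- denominator split
  have hden : Nat.factorial (e-1) = (∏ i ∈ (Finset.Ico 1 e).filter (fun i => ¬ p ∣ i), i) *
      (p^(e'-1) * Nat.factorial (e'-1)) := by
    have h1 : ∏ i ∈ Finset.Ico 1 e, i = Nat.factorial (e-1) := by
      have := hfact (e-1)
      rwa [show e - 1 + 1 = e by omega] at this
    rw [← h1, hsplit (fun i => i)]
    congr 1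
    rw [Finset.prod_mul_distrib, Finset.prod_const, hcard]
    congr 1
    have := hfact (e'-1)
    rwa [show e' - 1 + 1 = e' by omega] at this
  -- combine
  apply Nat.eq_of_mul_eq_mul_right (show 0 < p^(e'-1) * Nat.factorial (e'-1) by positivity)
  calc ((m*e - 1).choose (e-1) * ∏ i ∈ (Finset.Ico 1 e).filter (fun i => ¬ p ∣ i), i) * (p^(e'-1) * Nat.factorial (e'-1))
      = (m*e - 1).choose (e-1) * ((∏ i ∈ (Finset.Ico 1 e).filter (fun i => ¬ p ∣ i), i) * (p^(e'-1) * Nat.factorial (e'-1))) := by ring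
    _ = (m*e - 1).choose (e-1) * Nat.factorial (e-1) := by rw [← hden]
    _ = Nat.descFactorial (m*e - 1) (e-1) := by rw [Nat.descFactorial_eq_factorial_mul_choose, mul_comm]
    _ = (∏ i ∈ (Finset.Ico 1 e).filter (fun i => ¬ p ∣ i), (m*e - i)) * (p^(e'-1) * (Nat.factorial (e'-1) * ((m*e' - 1).choose (e'-1)))) := by
        rw [hnum, Nat.descFactorial_eq_factorial_mul_choose]
    _ = ((m*e' - 1).choose (e'-1) * ∏ i ∈ (Finset.Ico 1 e).filter (fun i => ¬ p ∣ i), (m*e - i)) * (p^(e'-1) * Nat.factorial (e'-1)) := by ring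

lemma kp_L2 (p a e n : ℕ) (hp : p.Prime) (ha : 1 ≤ a) (hpe : p^a ∣ e) (he : 0 < e) :
    ((∏ i ∈ (Finset.Ico 1 e).filter (fun i => ¬ p ∣ i), ((n+1)*e - i) : ℕ) : ZMod (p^(2*a)))
  = (-1)^(n*(e - e/p)) *
    ((∏ i ∈ (Finset.Ico 1 e).filter (fun i => ¬ p ∣ i), i : ℕ) : ZMod (p^(2*a))) := by
  haveI : NeZero (p^(2*a)) := ⟨(pow_pos hp.pos _).ne'⟩
  set R := ZMod (p^(2*a)) with hR
  set I := (Finset.Ico 1 e).filter (fun i => ¬ p ∣ i) with hI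
  have hpe1 : p ∣ e := dvd_trans (dvd_pow_self p (Nat.one_le_iff_ne_zero.mp ha)) hpe
  have hee : e = p * (e/p) := (Nat.mul_div_cancel' hpe1).symm
  have hEE : ((e : R) * (e : R)) = 0 := by
    have hdvd : p^(2*a) ∣ e * e := by
      rw [two_mul, pow_add]; exact mul_dvd_mul hpe hpe
    have := (ZMod.natCast_eq_zero_iff (e*e) (p^(2*a))).2 hdvd
    push_cast at this
    exact this
  -- unit lemma
  have hU : ∀ i : ℕ, ¬ p ∣ i → IsUnit ((i : ℕ) : R) := by
    intro i hi
    refine (ZMod.isUnit_iff_coprime i (p^(2*a))).2 ?_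
    exact (Nat.Coprime.pow_right _ (((Nat.Prime.coprime_iff_not_dvd hp).2 hi).symm))
  -- membership facts
  have hmem : ∀ i ∈ I, 1 ≤ i ∧ i < e ∧ ¬ p ∣ i := by
    intro i hi
    simp only [hI, Finset.mem_filter, Finset.mem_Ico] at hi
    exact ⟨hi.1.1, hi.1.2, hi.2⟩
  have hIclosed : ∀ i ∈ I, e - i ∈ I := by
    intro i hi
    obtain ⟨h1, h2, h3⟩ := hmem i hi
    simp only [hI, Finset.mem_filter, Finset.mem_Ico]
    refine ⟨⟨by omega, by omega⟩, fun hdvd => h3 ?_⟩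
    have := Nat.dvd_sub hpe1 hdvd
    rwa [show e - (e - i) = i by omega] at this
  -- the quotient function
  set F : ℕ → R := fun i => (((n+1)*e - i : ℕ) : R) * ((i : ℕ) : R)⁻¹ with hF
  -- key pair identity
  have hkey : ∀ i ∈ I, (((n+1)*e - i : ℕ) : R) * (((n+1)*e - (e - i) : ℕ) : R)
      = ((i : ℕ) : R) * (((e - i : ℕ)) : R) := by
    intro i hi
    obtain ⟨h1, h2, h3⟩ := hmem i hi
    have hle1 : i ≤ (n+1)*e := by nlinarith
    have hle2 : e - i ≤ (n+1)*e := by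
      have : e - i ≤ e := by omega
      nlinarith
    rw [Nat.cast_sub hle1, Nat.cast_sub hle2, Nat.cast_sub (by omega : i ≤ e)]
    push_cast
    have hx2 : (((n:R)+1) * (e:R)) * (((n:R)+1) * (e:R)) = 0 := by
      have : (((n:R)+1) * (e:R)) * (((n:R)+1) * (e:R)) = ((n:R)+1)*((n:R)+1) * ((e:R)*(e:R)) := by ring
      rw [this, hEE, mul_zero]
    have hxE : (((n:R)+1) * (e:R)) * (e:R) = 0 := by
      have : (((n:R)+1) * (e:R)) * (e:R) = ((n:R)+1) * ((e:R)*(e:R)) := by ring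
      rw [this, hEE, mul_zero]
    rw [Nat.cast_mul, Nat.cast_add, Nat.cast_one]
    linear_combination hx2 - hxE
  -- pair product of F is 1
  have hFpair : ∀ i ∈ I, F i * F (e - i) = 1 := by
    intro i hi
    obtain ⟨h1, h2, h3⟩ := hmem i hi
    obtain ⟨g1, g2, g3⟩ := hmem (e - i) (hIclosed i hi)
    simp only [hF]
    rw [mul_mul_mul_comm, hkey i hi, mul_mul_mul_comm,
      ZMod.mul_inv_of_unit _ (hU i h3), ZMod.mul_inv_of_unit _ (hU (e-i) g3), one_mul]
  -- product of F over I equals the sign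
  have hprodF : ∏ i ∈ I, F i = (-1 : R)^(n*(e - e/p)) := by
    by_cases hfix : p = 2 ∧ e/p % 2 = 1
    · -- fixed point case : p = 2, e/2 odd
      obtain ⟨rfl, hodd⟩ := hfix
      set e' := e / 2 with he'
      have ha1 : a = 1 := by
        by_contra hne
        have h2a : 2 ≤ a := by omega
        have h4e : (2:ℕ)^2 ∣ e := dvd_trans (pow_dvd_pow 2 h2a) hpe
        rw [hee] at h4e
        have : 2 ∣ e' := by
          have h4 : (2:ℕ)^2 = 2*2 := by norm_num
          rw [h4] at h4e
          exact (Nat.mul_dvd_mul_iff_left (by norm_num : (0:ℕ) < 2)).1 h4e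
        omega
      have he'I : e' ∈ I := by
        simp only [hI, Finset.mem_filter, Finset.mem_Ico]
        exact ⟨⟨by omega, by omega⟩, by omega⟩
      rw [← Finset.mul_prod_erase I F he'I]
      have herase : ∏ i ∈ I.erase e', F i = 1 := by
        refine Finset.prod_involution (fun i _ => e - i) ?_ ?_ ?_ ?_
        · intro i hi
          exact hFpair i (Finset.mem_of_mem_erase hi)
        · intro i hi _
          have hiI := Finset.mem_of_mem_erase hi
          have hne := Finset.ne_of_mem_erase hi
          obtain ⟨h1, h2, h3⟩ := hmem i hiI
          show e - i ≠ i
          intro heq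
          exact hne (by omega)
        · intro i hi
          have hiI := Finset.mem_of_mem_erase hi
          have hne := Finset.ne_of_mem_erase hi
          obtain ⟨h1, h2, h3⟩ := hmem i hiI
          refine Finset.mem_erase.2 ⟨?_, hIclosed i hiI⟩
          show e - i ≠ e'
          omega
        · intro i hi
          have hiI := Finset.mem_of_mem_erase hi
          obtain ⟨h1, h2, h3⟩ := hmem i hiI
          show e - (e - i) = i
          omega
      rw [herase, mul_one]
      -- F e' = (-1)^(n*(e - e'))
      have hsub : (n+1)*e - e' = (2*n+1)*e' := by
        have h2 : e = 2 * e' := by omega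
        rw [h2, show (n+1)*(2*e') = (2*n+1)*e' + e' by ring, Nat.add_sub_cancel]
      simp only [hF]
      rw [hsub]
      have hee' : e - e/2 = e' := by omega
      rw [hee']
      have h4 : (4 : R) = 0 := by
        have : ((4:ℕ) : R) = 0 := by
          rw [ZMod.natCast_eq_zero_iff, ha1]; norm_num
        rwa [Nat.cast_ofNat] at this
      push_cast
      rw [show (((2*n+1)*e' : ℕ) : R) = ((2*n+1 : ℕ) : R) * ((e' : ℕ) : R) from Nat.cast_mul (α := ZMod (2^(2*a))) _ _, mul_assoc, ZMod.mul_inv_of_unit _ (hU e' (by omega)), mul_one]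
      rcases Nat.even_or_odd n with hn | hn
      · rw [Even.neg_one_pow (hn.mul_right e')]
        obtain ⟨t, rfl⟩ := hn
        push_cast
        have hc : ((2*(t+t) : ℕ) : R) = 4 * (t : R) := by
          rw [show 2*(t+t) = 4*t by ring, show ((4*t : ℕ) : R) = ((4:ℕ) : R) * ((t:ℕ) : R) from Nat.cast_mul (α := ZMod (2^(2*a))) _ _, Nat.cast_ofNat]
        linear_combination (t : R) * h4 + hc
      · rw [Odd.neg_one_pow (hn.mul (Nat.odd_iff.2 hodd))]
        obtain ⟨t, rfl⟩ := hn
        push_cast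
        have hc : ((2*(2*t+1) : ℕ) : R) = 4 * (t : R) + 2 := by
          rw [show 2*(2*t+1) = 4*t+2 by ring, show ((4*t+2 : ℕ) : R) = ((4*t : ℕ) : R) + ((2:ℕ) : R) from Nat.cast_add (R := ZMod (2^(2*a))) _ _, show ((4*t : ℕ) : R) = ((4:ℕ) : R) * ((t:ℕ) : R) from Nat.cast_mul (α := ZMod (2^(2*a))) _ _, Nat.cast_ofNat, Nat.cast_ofNat]
        linear_combination ((t : R) + 1) * h4 + hc
    · -- no fixed point
      have heps : Even (n * (e - e/p)) := by
        refine Even.mul_left ?_ n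
        rcases Nat.Prime.eq_two_or_odd hp with hp2 | hoddp
        · subst hp2
          have h0 : e/2 % 2 = 0 := by
            rcases Nat.even_or_odd (e/2) with h | h
            · exact Nat.even_iff.1 h
            · exact absurd ⟨rfl, Nat.odd_iff.1 h⟩ hfix
          rw [Nat.even_iff]
          omega
        · have hsub : e - e/p = (e/p)*(p-1) := by
            rw [Nat.mul_sub, mul_one, Nat.div_mul_cancel hpe1]
          rw [hsub]
          exact Even.mul_left (Nat.even_iff.2 (by omega)) _
      rw [Even.neg_one_pow heps]
      refine Finset.prod_involution (fun i _ => e - i) hFpair ?_ hIclosed ?_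
      · intro i hi _
        obtain ⟨h1, h2, h3⟩ := hmem i hi
        show e - i ≠ i
        intro heq
        have he2 : e = 2 * i := by omega
        rcases Nat.Prime.eq_two_or_odd hp with hp2 | hoddp
        · refine hfix ⟨hp2, ?_⟩
          subst hp2
          omega
        · have hdd : p ∣ 2*i := he2 ▸ hpe1
          rcases (Nat.Prime.dvd_mul hp).1 hdd with h | h
          · have := (Nat.prime_dvd_prime_iff_eq hp Nat.prime_two).1 h
            omega
          · exact h3 h
      · intro i hi
        obtain ⟨h1, h2, h3⟩ := hmem i hi
        show e - (e - i) = i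
        omega
  -- assemble
  have hsplit : ∀ i ∈ I, (((n+1)*e - i : ℕ) : R) = F i * ((i:ℕ) : R) := by
    intro i hi
    obtain ⟨h1, h2, h3⟩ := hmem i hi
    simp only [hF]
    rw [mul_assoc, ZMod.inv_mul_of_unit _ (hU i h3), mul_one]
  push_cast
  rw [Finset.prod_congr rfl hsplit, Finset.prod_mul_distrib, hprodF]

lemma kp_L3 (p a e n : ℕ) (hp : p.Prime) (ha : 1 ≤ a) (hpe : p^a ∣ e) (he : 0 < e) :
    ((p:ℤ))^(2*a) ∣ (-1)^(n*e) * (((n+1)*e - 1).choose (e-1) : ℤ)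
      - (-1)^(n*(e/p)) * (((n+1)*(e/p) - 1).choose (e/p - 1) : ℤ) := by
  haveI : NeZero (p^(2*a)) := ⟨(pow_pos hp.pos _).ne'⟩
  have hcast : ((p:ℤ))^(2*a) = ((p^(2*a) : ℕ) : ℤ) := by push_cast; ring
  rw [hcast, ← ZMod.intCast_zmod_eq_zero_iff_dvd]
  set R := ZMod (p^(2*a)) with hR
  set I := (Finset.Ico 1 e).filter (fun i => ¬ p ∣ i) with hI
  set X := ((n+1)*e - 1).choose (e-1) with hX
  set Y := ((n+1)*(e/p) - 1).choose (e/p - 1) with hY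
  set A := ∏ i ∈ I, ((n+1)*e - i) with hA
  set B := ∏ i ∈ I, i with hB
  have hpe1 : p ∣ e := dvd_trans (dvd_pow_self p (Nat.one_le_iff_ne_zero.mp ha)) hpe
  have hL1 : X * B = Y * A := kp_L1 p (n+1) e hp (by omega) hpe1 he
  have hL2 : ((A : ℕ) : R) = (-1)^(n*(e - e/p)) * ((B : ℕ) : R) :=
    kp_L2 p a e n hp ha hpe he
  have hBunit : IsUnit ((B : ℕ) : R) := by
    rw [ZMod.isUnit_iff_coprime]
    refine Nat.Coprime.prod_left ?_
    intro i hi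
    simp only [hI, Finset.mem_filter] at hi
    exact Nat.Coprime.pow_right _ (((Nat.Prime.coprime_iff_not_dvd hp).2 hi.2).symm)
  -- cancel B
  have hXY : ((X : ℕ) : R) = (-1)^(n*(e - e/p)) * ((Y : ℕ) : R) := by
    refine hBunit.mul_right_cancel ?_
    have := congrArg (fun t : ℕ => ((t : ℕ) : R)) hL1
    rw [Nat.cast_mul, Nat.cast_mul] at this
    rw [this, hL2]
    ring
  -- final sign computation
  have hq : e/p + (e - e/p) = e := Nat.add_sub_cancel' (Nat.div_le_self e p)
  push_cast
  rw [show n*e = n*(e/p) + n*(e - e/p) by rw [← Nat.mul_add, hq], pow_add]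
  have hsq : ((-1 : R)^(n*(e - e/p))) * ((-1 : R)^(n*(e - e/p))) = 1 := by
    rw [← pow_add]
    exact Even.neg_one_pow ⟨n*(e - e/p), rfl⟩
  linear_combination ((-1:R)^(n*(e/p)) * (-1:R)^(n*(e - e/p))) * hXY
    + ((-1:R)^(n*(e/p)) * ((Y:ℕ):R)) * hsq

lemma kp_L4 (n d p : ℕ) (hd : 1 ≤ d) (hp : p.Prime) (hpd : p ∣ d) :
    ((p:ℤ))^(2 * d.factorization p) ∣
      ∑ k ∈ d.divisors, (ArithmeticFunction.moebius k : ℤ) * (-1)^(n*(d/k)) *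
        (((n+1)*(d/k) - 1).choose (d/k - 1) : ℤ) := by
  classical
  set a := d.factorization p with hadef
  have ha : 1 ≤ a := hp.factorization_pos_of_dvd (by omega) hpd
  set s : ℕ → ℤ := fun c => (-1)^(n*c) * (((n+1)*c - 1).choose (c - 1) : ℤ) with hs
  have hterm : ∀ k, (ArithmeticFunction.moebius k : ℤ) * (-1)^(n*(d/k)) *
      (((n+1)*(d/k) - 1).choose (d/k - 1) : ℤ)
      = (ArithmeticFunction.moebius k : ℤ) * s (d/k) := by
    intro k; rw [hs]; ring
  rw [Finset.sum_congr rfl (fun k _ => hterm k)]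
  set f : ℕ → ℤ := fun k => (ArithmeticFunction.moebius k : ℤ) * s (d/k) with hf
  set g : ℕ → ℤ := fun k => (ArithmeticFunction.moebius (p*k) : ℤ) * s (d/(p*k)) with hg
  set S₁ := d.divisors.filter (fun k => ¬ p ∣ k) with hS₁
  set S₂ := d.divisors.filter (fun k => p ∣ k) with hS₂
  -- multiples part equals shifted sum over S₁
  have hM : ∑ k ∈ S₂, f k = ∑ k ∈ S₁, g k := by
    have h2 : ∑ k ∈ S₂.filter Squarefree, f k = ∑ k ∈ S₂, f k := by
      refine Finset.sum_filter_of_ne ?_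
      intro k hk hfk
      by_contra hsq
      rw [hf] at hfk
      simp [ArithmeticFunction.moebius_eq_zero_of_not_squarefree hsq] at hfk
    have h1 : ∑ k ∈ S₁.filter Squarefree, g k = ∑ k ∈ S₁, g k := by
      refine Finset.sum_filter_of_ne ?_
      intro k hk hgk
      by_contra hsq
      have : ¬ Squarefree (p*k) := fun h => hsq (h.squarefree_of_dvd ⟨p, mul_comm p k⟩)
      rw [hg] at hgk
      simp [ArithmeticFunction.moebius_eq_zero_of_not_squarefree this] at hgk
    rw [← h2, ← h1]
    refine Finset.sum_nbij' (fun k => k / p) (fun k => p * k) ?_ ?_ ?_ ?_ ?_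
    · intro k hk
      simp only [hS₂, Finset.mem_filter, Nat.mem_divisors] at hk
      obtain ⟨⟨⟨hkd, hd0⟩, hpk⟩, hsq⟩ := hk
      simp only [hS₁, Finset.mem_filter, Nat.mem_divisors]
      refine ⟨⟨⟨dvd_trans (Nat.div_dvd_of_dvd hpk) hkd, hd0⟩, ?_⟩, ?_⟩
      · intro hdvd
        have : p * p ∣ k := by
          obtain ⟨c, rfl⟩ := hpk
          have : p ∣ c := by rwa [Nat.mul_div_cancel_left c hp.pos] at hdvd
          exact mul_dvd_mul_left p this
        exact (Nat.squarefree_iff_prime_squarefree.1 hsq) p hp this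
      · exact hsq.squarefree_of_dvd (Nat.div_dvd_of_dvd hpk)
    · intro k hk
      simp only [hS₁, Finset.mem_filter, Nat.mem_divisors] at hk
      obtain ⟨⟨⟨hkd, hd0⟩, hpk⟩, hsq⟩ := hk
      simp only [hS₂, Finset.mem_filter, Nat.mem_divisors]
      have hcop : Nat.Coprime p k := (Nat.Prime.coprime_iff_not_dvd hp).2 hpk
      refine ⟨⟨⟨?_, hd0⟩, ⟨k, rfl⟩⟩, ?_⟩
      · exact Nat.Coprime.mul_dvd_of_dvd_of_dvd hcop hpd hkd
      · exact (Nat.squarefree_mul hcop).2 ⟨hp.squarefree, hsq⟩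
    · intro k hk
      simp only [hS₂, Finset.mem_filter, Nat.mem_divisors] at hk
      exact Nat.mul_div_cancel' hk.1.2
    · intro k hk
      exact Nat.mul_div_cancel_left k hp.pos
    · intro k hk
      simp only [hS₂, Finset.mem_filter, Nat.mem_divisors] at hk
      show ArithmeticFunction.moebius k * s (d/k)
          = ArithmeticFunction.moebius (p*(k/p)) * s (d/(p*(k/p)))
      rw [Nat.mul_div_cancel' hk.1.2]
  -- combine
  rw [← Finset.sum_filter_add_sum_filter_not d.divisors (fun k => p ∣ k), ← hS₂, ← hS₁, hM,
    ← Finset.sum_add_distrib]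
  refine Finset.dvd_sum ?_
  intro k hk
  simp only [hS₁, Finset.mem_filter, Nat.mem_divisors] at hk
  obtain ⟨⟨hkd, hd0⟩, hpk⟩ := hk
  have hcop : Nat.Coprime p k := (Nat.Prime.coprime_iff_not_dvd hp).2 hpk
  have hk0 : 0 < k := Nat.pos_of_dvd_of_pos hkd hd
  -- μ(p*k) = -μ(k)
  have hmu : (ArithmeticFunction.moebius (p*k) : ℤ)
      = -(ArithmeticFunction.moebius k : ℤ) := by
    rw [ArithmeticFunction.isMultiplicative_moebius.map_mul_of_coprime hcop,
      ArithmeticFunction.moebius_apply_prime hp]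
    ring
  have he : 0 < d / k := Nat.div_pos (Nat.le_of_dvd (by omega) hkd) hk0
  have hfac : (d / k).factorization p = a := by
    rw [Nat.factorization_div hkd]
    simp [Nat.factorization_eq_zero_of_not_dvd hpk, hadef]
  have hpa : p ^ a ∣ d / k := by
    rw [← hfac]
    exact Nat.ordProj_dvd _ _
  have hdiv : d / (p * k) = (d / k) / p := by
    rw [Nat.div_div_eq_div_mul, mul_comm]
  have hL3 := kp_L3 p a (d/k) n hp ha hpa he
  have target_eq : g k + f k
      = (ArithmeticFunction.moebius k : ℤ) * (s (d/k) - s ((d/k)/p)) := by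
    simp only [hg, hf]
    rw [hmu, hdiv]
    ring
  rw [target_eq]
  exact Dvd.dvd.mul_left hL3 _

lemma kp_choose_step (m c : ℕ) (hc : 1 ≤ c) :
    (m*c).choose c = m * ((m*c - 1).choose (c-1)) := by
  rcases Nat.eq_zero_or_pos m with rfl | hm
  · simp [Nat.choose_eq_zero_of_lt (by omega : 0 < c)]
  · have h := Nat.add_one_mul_choose_eq (m*c - 1) (c - 1)
    have hmc : 0 < m * c := Nat.mul_pos hm hc
    rw [show (m*c - 1) + 1 = m*c by omega, show (c - 1) + 1 = c by omega] at h
    apply Nat.eq_of_mul_eq_mul_right hc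
    rw [← h]; ring

/-- **Integrality of the genus-zero Klemm–Pandharipande BPS invariants of the local
Calabi–Yau fourfold over the weighted projective plane ℙ(1,1,n) with divisor Hₙ + Qₙ.**
For all integers `n ≥ 1` and `d ≥ 1`, the integer `(n+1)·d²` divides
`∑_{k ∣ d} μ(k) · (−1)^{n·(d/k)} · C((n+1)d/k, d/k)`, the sum running over the positive
divisors `k` of `d`. -/
theorem kp_integrality_P11n (n d : ℕ) (hn : 1 ≤ n) (hd : 1 ≤ d) :
    ((n : ℤ) + 1) * (d : ℤ) ^ 2 ∣
      ∑ k ∈ d.divisors,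
        ArithmeticFunction.moebius k * (-1) ^ (n * (d / k)) *
          (((n + 1) * (d / k)).choose (d / k) : ℤ) := by
  have hstep : ∀ k ∈ d.divisors,
      (ArithmeticFunction.moebius k : ℤ) * (-1)^(n*(d/k)) * (((n+1)*(d/k)).choose (d/k) : ℤ)
      = ((n:ℤ)+1) * ((ArithmeticFunction.moebius k : ℤ) * (-1)^(n*(d/k)) *
          (((n+1)*(d/k) - 1).choose (d/k - 1) : ℤ)) := by
    intro k hk
    have hk' : 1 ≤ d / k :=
      Nat.div_pos (Nat.le_of_dvd (by omega) (Nat.dvd_of_mem_divisors hk))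
        (Nat.pos_of_mem_divisors hk)
    rw [kp_choose_step (n+1) (d/k) hk']
    push_cast
    ring
  rw [Finset.sum_congr rfl hstep, ← Finset.mul_sum]
  refine mul_dvd_mul_left _ ?_
  -- (d:ℤ)^2 divides the primitive sum
  have hkey : ∀ p ∈ d.primeFactors, ((p:ℤ))^(2 * d.factorization p) ∣
      ∑ k ∈ d.divisors, (ArithmeticFunction.moebius k : ℤ) * (-1)^(n*(d/k)) *
        (((n+1)*(d/k) - 1).choose (d/k - 1) : ℤ) := by
    intro p hp
    exact kp_L4 n d p hd (Nat.prime_of_mem_primeFactors hp) (Nat.dvd_of_mem_primeFactors hp)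
  have h2 : d^2 = ∏ p ∈ d.primeFactors, p ^ (2 * d.factorization p) := by
    conv_lhs => rw [← Nat.factorization_prod_pow_eq_self (show d ≠ 0 by omega)]
    rw [Finsupp.prod, Nat.support_factorization, ← Finset.prod_pow]
    refine Finset.prod_congr rfl fun p _ => ?_
    rw [← pow_mul, mul_comm]
  have h2' : (d:ℤ)^2 = ∏ p ∈ d.primeFactors, ((p:ℤ)) ^ (2 * d.factorization p) := by
    have := congrArg (fun t : ℕ => (t : ℤ)) h2
    push_cast at this
    exact this
  rw [h2']
  refine Finset.prod_dvd_of_coprime ?_ hkey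
  intro p hp q hq hne
  simp only [Function.onFun]
  refine IsCoprime.pow ?_
  rw [Nat.isCoprime_iff_coprime]
  exact (Nat.coprime_primes
    (Nat.prime_of_mem_primeFactors (Finset.mem_coe.1 hp))
    (Nat.prime_of_mem_primeFactors (Finset.mem_coe.1 hq))).2 hne
end

section
/- Let d₀ ≥ 1 and d₁, d₂, d₃ ≥ 0 be integers with d₁ + d₂ + d₃ > d₀. Then the rational function ( [d₁][d₂+d₃] / ( [d₀][d₁+d₂+d₃−d₀] ) ) · B(d₃, d₀−d₁) · B(d₃, d₀−d₂) · B(d₀, d₃) · B(d₁+d₂+d₃−d₀, d₃) ∈ ℚ(t) is a Laurent polynomial in t with nonnegative integer coefficients. -/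
noncomputable section

/-- The field ℚ(t) of rational functions over ℚ. -/
abbrev Ft : Type := RatFunc ℚ

/-- The variable `t` of ℚ(t). -/
def tvar : Ft := RatFunc.X

/-- The symmetric q-integer `[m] = (t^m − t^{−m})/(t − t^{−1})` (so `[0] = 0`). -/
def qint (m : ℕ) : Ft := (tvar ^ (m : ℤ) - tvar ^ (-(m : ℤ))) / (tvar - tvar⁻¹)

/-- The symmetric q-factorial `[m]! = [1][2]⋯[m]`. -/
def qfact (m : ℕ) : Ft := ∏ i ∈ Finset.range m, qint (i + 1)

/-- The symmetric q-binomial `B(m,r) = [m]!/([r]![m−r]!)` if `0 ≤ r ≤ m`,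
with `B(m,0) = 1` for every integer `m`, and `B(m,r) = 0` otherwise. -/
def qbinom (m r : ℤ) : Ft :=
  if r = 0 then 1
  else if 0 ≤ r ∧ r ≤ m then qfact m.toNat / (qfact r.toNat * qfact (m - r).toNat)
  else 0

lemma tvar_ne : (tvar : Ft) ≠ 0 := by simpa [tvar] using RatFunc.X_ne_zero

lemma tvar_pow_ne_one (k : ℕ) (hk : k ≠ 0) : (tvar : Ft) ^ k ≠ 1 := by
  intro h
  have h2 : (algebraMap (Polynomial ℚ) Ft) (Polynomial.X ^ k) = algebraMap (Polynomial ℚ) Ft 1 := by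
    simpa [tvar, map_pow, RatFunc.algebraMap_X] using h
  have h3 : (Polynomial.X : Polynomial ℚ) ^ k = 1 := RatFunc.algebraMap_injective ℚ h2
  have := congrArg Polynomial.natDegree h3
  simp [Polynomial.natDegree_X_pow] at this
  exact hk this

lemma tsub_ne : (tvar : Ft) - tvar⁻¹ ≠ 0 := by
  intro h
  have h1 : (tvar : Ft) = tvar⁻¹ := by linear_combination h
  have h2 : (tvar : Ft) * tvar = 1 := by
    nth_rewrite 2 [h1]
    exact mul_inv_cancel₀ tvar_ne
  have : (tvar : Ft) ^ 2 = 1 := by rw [pow_two]; exact h2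
  exact tvar_pow_ne_one 2 (by norm_num) this

lemma qint_zero : qint 0 = 0 := by simp [qint]

lemma qint_one : qint 1 = 1 := by
  simp only [qint, Nat.cast_one, zpow_one, zpow_neg, zpow_one]
  exact div_self tsub_ne

lemma qint_add (x y : ℕ) :
    qint (x + y) = tvar ^ (x : ℤ) * qint y + tvar ^ (-(y : ℤ)) * qint x := by
  have hu : (tvar : Ft) ^ (x : ℤ) ≠ 0 := zpow_ne_zero _ tvar_ne
  have hv : (tvar : Ft) ^ (y : ℤ) ≠ 0 := zpow_ne_zero _ tvar_ne
  simp only [qint, Nat.cast_add, ← mul_div_assoc]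
  rw [← add_div]
  congr 1
  have e1 : (tvar : Ft) ^ ((x : ℤ) + y) = tvar ^ (x : ℤ) * tvar ^ (y : ℤ) :=
    zpow_add₀ tvar_ne _ _
  have e2 : (tvar : Ft) ^ (-((x : ℤ) + y)) = (tvar ^ (x : ℤ))⁻¹ * (tvar ^ (y : ℤ))⁻¹ := by
    rw [neg_add, zpow_add₀ tvar_ne, zpow_neg, zpow_neg]
  rw [e1, e2, zpow_neg, zpow_neg]
  field_simp
  ring

lemma qint_ne (n : ℕ) (hn : n ≠ 0) : qint n ≠ 0 := by
  have hnum : (tvar : Ft) ^ (n : ℤ) - tvar ^ (-(n : ℤ)) ≠ 0 := by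
    intro h
    have h1 : (tvar : Ft) ^ (n : ℤ) = tvar ^ (-(n : ℤ)) := by linear_combination h
    have h2 : (tvar : Ft) ^ (n : ℤ) * tvar ^ (n : ℤ) = 1 := by
      nth_rewrite 2 [h1]
      rw [← zpow_add₀ tvar_ne]
      simp
    have h3 : (tvar : Ft) ^ (2 * n) = 1 := by
      have : ((2 * n : ℕ) : ℤ) = (n : ℤ) + n := by push_cast; ring
      rw [← zpow_natCast, this, zpow_add₀ tvar_ne]
      exact h2
    exact tvar_pow_ne_one (2 * n) (by omega) h3
  exact div_ne_zero hnum tsub_ne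

lemma qfact_zero : qfact 0 = 1 := by simp [qfact]

lemma qfact_succ (n : ℕ) : qfact (n + 1) = qfact n * qint (n + 1) := by
  simp [qfact, Finset.prod_range_succ]

lemma qfact_ne (n : ℕ) : qfact n ≠ 0 := by
  induction n with
  | zero => simp [qfact_zero]
  | succ k ih => rw [qfact_succ]; exact mul_ne_zero ih (qint_ne _ (by omega))

/-- Positivity: `f` is a finite sum of integer powers of `t`. -/
def posL (f : Ft) : Prop := ∃ L : List ℤ, f = (L.map fun z => tvar ^ z).sum

lemma posL_zero : posL 0 := ⟨[], by simp⟩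

lemma posL_tzpow (z : ℤ) : posL (tvar ^ z) := ⟨[z], by simp⟩

lemma posL_one : posL 1 := ⟨[0], by simp⟩

lemma posL_add {f g : Ft} (hf : posL f) (hg : posL g) : posL (f + g) := by
  obtain ⟨L1, rfl⟩ := hf
  obtain ⟨L2, rfl⟩ := hg
  exact ⟨L1 ++ L2, by simp⟩

lemma posL_monomial_mul (z : ℤ) {g : Ft} (hg : posL g) : posL (tvar ^ z * g) := by
  obtain ⟨L2, rfl⟩ := hg
  refine ⟨L2.map (z + ·), ?_⟩
  rw [List.map_map]
  induction L2 with
  | nil => simp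
  | cons w L2' ih2 =>
      simp only [List.map_cons, List.sum_cons, mul_add, ih2, Function.comp]
      rw [zpow_add₀ tvar_ne]

lemma posL_mul {f g : Ft} (hf : posL f) (hg : posL g) : posL (f * g) := by
  obtain ⟨L1, rfl⟩ := hf
  induction L1 with
  | nil => simpa using posL_zero
  | cons z L ih =>
      simp only [List.map_cons, List.sum_cons, add_mul]
      exact posL_add (posL_monomial_mul z hg) ih

lemma posL_sum {s : Finset ℕ} {F : ℕ → Ft} (h : ∀ i ∈ s, posL (F i)) :
    posL (∑ i ∈ s, F i) := by
  classical
  induction s using Finset.induction with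
  | empty => simpa using posL_zero
  | insert _ _ hx ih =>
      rw [Finset.sum_insert hx]
      exact posL_add (h _ (Finset.mem_insert_self _ _))
        (ih fun i hi => h i (Finset.mem_insert_of_mem hi))

lemma posL_qint (n : ℕ) : posL (qint n) := by
  induction n with
  | zero => simpa [qint_zero] using posL_zero
  | succ k ih =>
      rw [show k + 1 = k + 1 from rfl, qint_add k 1, qint_one]
      exact posL_add (by simpa using posL_tzpow (k : ℤ))
        (posL_mul (posL_tzpow (-(1:ℤ))) ih)

/-- Conversion of the list form to the finsupp form required by the theorem. -/
lemma posL_to_finsupp {f : Ft} (hf : posL f) :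
    ∃ c : ℤ →₀ ℕ, f = c.sum fun i a => (a : Ft) * tvar ^ i := by
  obtain ⟨L, rfl⟩ := hf
  induction L with
  | nil => exact ⟨0, by simp⟩
  | cons z L ih =>
      obtain ⟨c, hc⟩ := ih
      refine ⟨c + Finsupp.single z 1, ?_⟩
      rw [Finsupp.sum_add_index (by intro i _; simp) (by intro i _ a b; push_cast; ring)]
      rw [List.map_cons, List.sum_cons, hc, Finsupp.sum_single_index (by simp)]
      push_cast
      ring


/-- ℕ-indexed symmetric q-binomial. -/
def nqb (n k : ℕ) : Ft := if k ≤ n then qfact n / (qfact k * qfact (n - k)) else 0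

lemma nqb_self (n : ℕ) : nqb n n = 1 := by
  simp only [nqb, if_pos (le_refl n), Nat.sub_self, qfact_zero, mul_one]
  exact div_self (qfact_ne n)

lemma nqb_zero (n : ℕ) : nqb n 0 = 1 := by
  simp only [nqb, if_pos (Nat.zero_le n), qfact_zero, one_mul, Nat.sub_zero]
  exact div_self (qfact_ne n)

lemma nqb_of_gt {n k : ℕ} (h : n < k) : nqb n k = 0 := by
  simp [nqb, Nat.not_le.mpr h]

/-- absorption: `[k+1] B(n,k+1) = [n] B(n-1,k)`. -/
lemma qint_mul_nqb_top (n k : ℕ) :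
    qint (k + 1) * nqb n (k + 1) = qint n * nqb (n - 1) k := by
  rcases n with _ | n'
  · simp [nqb_of_gt (by omega : (0:ℕ) < k+1), qint_zero]
  · rcases le_or_gt (k + 1) (n' + 1) with h | h
    · have hk : k ≤ n' := by omega
      simp only [nqb, if_pos h, if_pos hk, Nat.add_sub_cancel]
      have hsub : n' + 1 - (k + 1) = n' - k := by omega
      rw [hsub, qfact_succ n', qfact_succ k]
      have h1 : qfact k ≠ 0 := qfact_ne k
      have h2 : qfact (n' - k) ≠ 0 := qfact_ne _
      have h3 : qint (k+1) ≠ 0 := qint_ne _ (by omega)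
      field_simp
    · have h1 : n' < k := by omega
      rw [nqb_of_gt (by omega), nqb_of_gt (by omega : n' + 1 - 1 < k)]
      simp

/-- absorption: `[j] B(k+j,k) = [k+j] B(k+j-1,k)`. -/
lemma qint_mul_nqb_bot (k j : ℕ) :
    qint j * nqb (k + j) k = qint (k + j) * nqb (k + j - 1) k := by
  rcases j with _ | j'
  · rcases k with _ | k'
    · simp [qint_zero]
    · rw [qint_zero, nqb_of_gt (by omega : k' + 1 - 1 < k' + 1)]
      simp
  · have h1 : k ≤ k + (j' + 1) := by omega
    have h2 : k ≤ k + j' := by omega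
    have h3 : k + (j' + 1) - 1 = k + j' := by omega
    rw [h3]
    simp only [nqb, if_pos h1, if_pos h2, Nat.add_sub_cancel_left]
    rw [show k + (j' + 1) = (k + j') + 1 by omega, qfact_succ (k + j'), qfact_succ j']
    have hf1 : qfact k ≠ 0 := qfact_ne k
    have hf2 : qfact j' ≠ 0 := qfact_ne j'
    have hf3 : qint (j' + 1) ≠ 0 := qint_ne _ (by omega)
    field_simp

/-- symmetric q-Pascal rule. -/
lemma nqb_pascal (n k : ℕ) :
    nqb (n + 1) (k + 1)
      = tvar ^ ((k : ℤ) + 1) * nqb n (k + 1) + tvar ^ ((k : ℤ) - n) * nqb n k := by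
  rcases lt_or_ge n k with h | h
  · rw [nqb_of_gt (by omega), nqb_of_gt h, nqb_of_gt (by omega)]
    simp
  · rcases eq_or_lt_of_le h with rfl | hlt
    · rw [nqb_self, nqb_self, nqb_of_gt (by omega)]
      simp
    · -- k < n
      have hk1n : k + 1 ≤ n := by omega
      have key : qint (n + 1)
          = tvar ^ ((k : ℤ) + 1) * qint (n - k) + tvar ^ ((k : ℤ) - n) * qint (k + 1) := by
        have hsplit := qint_add (k + 1) (n - k)
        have hnk : k + 1 + (n - k) = n + 1 := by omega
        rw [hnk] at hsplit
        have e1 : (((k + 1 : ℕ)) : ℤ) = (k : ℤ) + 1 := by push_cast; ring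
        have e2 : (-(((n - k : ℕ)) : ℤ)) = (k : ℤ) - n := by
          push_cast [Nat.cast_sub h]; ring
        rw [e1, e2] at hsplit
        exact hsplit
      obtain ⟨A, hA⟩ : ∃ A, n - k = A + 1 := ⟨n - k - 1, by omega⟩
      simp only [nqb, if_pos (by omega : k + 1 ≤ n + 1), if_pos hk1n, if_pos h]
      have e1 : n + 1 - (k + 1) = A + 1 := by omega
      have e2 : n - (k + 1) = A := by omega
      rw [hA] at key
      rw [e1, e2, hA, qfact_succ n, key, qfact_succ k, qfact_succ A]
      have hf1 : qfact k ≠ 0 := qfact_ne _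
      have hf2 : qfact A ≠ 0 := qfact_ne _
      have hf3 : qfact n ≠ 0 := qfact_ne _
      have hf4 : qint (k + 1) ≠ 0 := qint_ne _ (by omega)
      have hf5 : qint (A + 1) ≠ 0 := qint_ne _ (by omega)
      field_simp

lemma posL_nqb (n k : ℕ) : posL (nqb n k) := by
  induction n generalizing k with
  | zero =>
      rcases k with _ | k'
      · simpa [nqb_zero] using posL_one
      · simpa [nqb_of_gt (by omega : 0 < k' + 1)] using posL_zero
  | succ n' ih =>
      rcases k with _ | k'
      · simpa [nqb_zero] using posL_one
      · rw [nqb_pascal]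
        exact posL_add (posL_mul (posL_tzpow _) (ih (k' + 1)))
          (posL_mul (posL_tzpow _) (ih k'))

/-- telescoping sum lemma: `[r] B(μ+r, μ) = Σ_{j<r} t^{(r-1-j) - j(μ+1)} [μ+1] B(μ+r-1-j, μ)`. -/
lemma qint_nqb_sum (μ : ℕ) : ∀ r : ℕ,
    qint r * nqb (μ + r) μ
      = ∑ j ∈ Finset.range r,
          tvar ^ (((r - 1 - j : ℕ) : ℤ) - (j : ℤ) * ((μ : ℤ) + 1)) *
            (qint (μ + 1) * nqb (μ + r - 1 - j) μ) := by
  intro r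
  induction r with
  | zero => simp [qint_zero]
  | succ r' ih =>
      have h1 : qint (r' + 1) * nqb (μ + (r' + 1)) μ
          = qint (μ + (r' + 1)) * nqb (μ + r') μ := by
        have h := qint_mul_nqb_bot μ (r' + 1)
        rwa [show μ + (r' + 1) - 1 = μ + r' by omega] at h
      rw [h1]
      have hsp : qint (μ + (r' + 1))
          = tvar ^ (r' : ℤ) * qint (μ + 1) + tvar ^ (-(((μ + 1 : ℕ)) : ℤ)) * qint r' := by
        have h := qint_add r' (μ + 1)
        rw [show r' + (μ + 1) = μ + (r' + 1) by omega] at h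
        exact h
      rw [hsp, add_mul, add_comm, Finset.sum_range_succ']
      congr 1
      · rw [mul_assoc, ih, Finset.mul_sum]
        refine Finset.sum_congr rfl fun j hj => ?_
        have hj' : j < r' := Finset.mem_range.mp hj
        rw [show μ + (r' + 1) - 1 - (j + 1) = μ + r' - 1 - j by omega]
        rw [← mul_assoc, ← zpow_add₀ tvar_ne]
        congr 2
        rw [show (r' + 1 - 1 - (j + 1) : ℕ) = (r' - 1 - j : ℕ) by omega]
        push_cast
        ring
      · rw [show μ + (r' + 1) - 1 - 0 = μ + r' by omega,
          show (r' + 1 - 1 - 0 : ℕ) = r' by omega]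
        simp only [Nat.cast_zero, zero_mul, sub_zero, Nat.cast_ofNat]
        ring


section MainIdentity

variable (μ α β γ p r : ℕ)

/-- absorbed sum used in the last family of terms -/
def SUMT (μ p r : ℕ) : Ft :=
  ∑ j ∈ Finset.range r,
    tvar ^ (((r - 1 - j : ℕ) : ℤ) - (j : ℤ) * ((μ : ℤ) + 1)) *
      (nqb (μ + p) μ * nqb (μ + r - 1 - j) μ)

lemma A1 : qint p * nqb (μ + 1 + p) (μ + 1) = qint (μ + 1 + p) * nqb (μ + p) (μ + 1) := by
  have h := qint_mul_nqb_bot (μ + 1) p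
  rwa [show μ + 1 + p - 1 = μ + p by omega] at h

lemma A2 (hγ : α + γ = μ) :
    qint γ * nqb (μ + 1) (α + 1) = qint (μ + 1) * nqb μ (α + 1) := by
  have h := qint_mul_nqb_bot (α + 1) γ
  rwa [show α + 1 + γ = μ + 1 by omega, show μ + 1 - 1 = μ by omega] at h

lemma A3 : qint (μ + 1) * nqb (μ + 1 + p) (μ + 1) = qint (μ + 1 + p) * nqb (μ + p) μ := by
  have h := qint_mul_nqb_top (μ + 1 + p) μ
  rwa [show μ + 1 + p - 1 = μ + p by omega] at h

lemma A4 : qint (α + 1) * nqb (μ + 1) (α + 1) = qint (μ + 1) * nqb μ α := by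
  have h := qint_mul_nqb_top (μ + 1) α
  rwa [show μ + 1 - 1 = μ by omega] at h

lemma A7 : qint r * nqb (μ + r) μ * nqb (μ + 1 + p) (μ + 1)
    = qint (μ + 1 + p) * SUMT μ p r := by
  rw [qint_nqb_sum, Finset.sum_mul, SUMT, Finset.mul_sum]
  refine Finset.sum_congr rfl fun j hj => ?_
  have h := A3 μ p
  linear_combination (tvar ^ (((r - 1 - j : ℕ) : ℤ) - (j : ℤ) * ((μ : ℤ) + 1)) *
    nqb (μ + r - 1 - j) μ) * h

lemma P1lem (hγ : α + γ = μ) :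
    qint (γ + p) * (nqb (μ + 1 + p) (μ + 1) * nqb (μ + 1) (α + 1))
      = qint (μ + 1 + p) *
          (tvar ^ (γ : ℤ) * (nqb (μ + p) (μ + 1) * nqb (μ + 1) (α + 1))
            + tvar ^ (-(p : ℤ)) * (nqb μ (α + 1) * nqb (μ + p) μ)) := by
  have Hs := qint_add γ p
  have hA1 := A1 μ p
  have hA2 := A2 μ α γ hγ
  have hA3 := A3 μ p
  linear_combination (nqb (μ + 1 + p) (μ + 1) * nqb (μ + 1) (α + 1)) * Hs
    + (tvar ^ (γ : ℤ) * nqb (μ + 1) (α + 1)) * hA1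
    + (tvar ^ (-(p : ℤ)) * nqb (μ + 1 + p) (μ + 1)) * hA2
    + (tvar ^ (-(p : ℤ)) * nqb μ (α + 1)) * hA3

lemma P2alem : qint (α + 1) * (nqb (μ + 1) (α + 1) * nqb (μ + 1 + r) (μ + 1))
    = qint (μ + 1 + r) * (nqb μ α * nqb (μ + r) μ) := by
  have hA4 := A4 μ α
  have hA5 : qint (μ + 1) * nqb (μ + 1 + r) (μ + 1) = qint (μ + 1 + r) * nqb (μ + r) μ := A3 μ r
  linear_combination (nqb (μ + 1 + r) (μ + 1)) * hA4 + (nqb μ α) * hA5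

lemma P2blem :
    qint (r + (β + 1)) * (nqb (μ + 1 + p) (μ + 1) * nqb (μ + 1) (β + 1) * nqb (μ + r) μ)
      = qint (μ + 1 + p) *
          (tvar ^ (r : ℤ) * (nqb μ β * nqb (μ + p) μ * nqb (μ + r) μ)
            + tvar ^ (-((β + 1 : ℕ) : ℤ)) * (nqb (μ + 1) (β + 1) * SUMT μ p r)) := by
  have Hs := qint_add r (β + 1)
  have hA6 := A4 μ β
  have hA3 := A3 μ p
  have hA7 := A7 μ p r
  linear_combination (nqb (μ + 1 + p) (μ + 1) * nqb (μ + 1) (β + 1) * nqb (μ + r) μ) * Hs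
    + (tvar ^ (r : ℤ) * nqb (μ + 1 + p) (μ + 1) * nqb (μ + r) μ) * hA6
    + (tvar ^ (r : ℤ) * nqb μ β * nqb (μ + r) μ) * hA3
    + (tvar ^ (-((β + 1 : ℕ) : ℤ)) * nqb (μ + 1) (β + 1)) * hA7

/-- the main positive-sum identity, interior case with `a = α+1 ≥ 1`, `b = β+1 ≥ 1`. -/
lemma main_id (hγ : α + γ = μ) (hc : α + β + r + 1 = μ + p) :
    qint (β + 1 + r) * qint ((α + 1) + (μ + 1 + r)) *
        (nqb (μ + 1 + p) (μ + 1) * nqb (μ + 1 + r) (μ + 1) *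
          nqb (μ + 1) (α + 1) * nqb (μ + 1) (β + 1))
      = (tvar ^ ((α + 1 : ℕ) : ℤ) * tvar ^ (γ : ℤ) *
            (nqb (μ + p) (μ + 1) * nqb (μ + 1) (α + 1) * nqb (μ + 1 + r) (μ + 1) *
              nqb (μ + 1) (β + 1))
          + tvar ^ ((α + 1 : ℕ) : ℤ) * tvar ^ (-(p : ℤ)) *
            (nqb μ (α + 1) * nqb (μ + p) μ * nqb (μ + 1 + r) (μ + 1) * nqb (μ + 1) (β + 1))
          + tvar ^ (-((μ + 1 + r : ℕ) : ℤ)) * tvar ^ (r : ℤ) *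
            (nqb μ β * nqb (μ + p) μ * nqb μ α * nqb (μ + r) μ)
          + tvar ^ (-((μ + 1 + r : ℕ) : ℤ)) * tvar ^ (-((β + 1 : ℕ) : ℤ)) *
            (nqb μ α * nqb (μ + 1) (β + 1) * SUMT μ p r)) *
        (qint (μ + 1 + p) * qint (μ + 1 + r)) := by
  have Hu2 := qint_add (α + 1) (μ + 1 + r)
  have Hidx1 : qint (β + 1 + r) = qint (γ + p) := by rw [show β + 1 + r = γ + p by omega]
  have Hidx2 : qint (β + 1 + r) = qint (r + (β + 1)) := by rw [show β + 1 + r = r + (β + 1) by omega]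
  have hP1 := P1lem μ α γ p hγ
  have hP2a := P2alem μ α r
  have hP2b := P2blem μ β p r
  linear_combination
    (qint (β + 1 + r) * (nqb (μ + 1 + p) (μ + 1) * nqb (μ + 1 + r) (μ + 1) *
      nqb (μ + 1) (α + 1) * nqb (μ + 1) (β + 1))) * Hu2
    + (tvar ^ ((α + 1 : ℕ) : ℤ) * qint (μ + 1 + r) * (nqb (μ + 1 + p) (μ + 1) *
        nqb (μ + 1 + r) (μ + 1) * nqb (μ + 1) (α + 1) * nqb (μ + 1) (β + 1))) * Hidx1
    + (tvar ^ ((α + 1 : ℕ) : ℤ) * qint (μ + 1 + r) *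
        (nqb (μ + 1 + r) (μ + 1) * nqb (μ + 1) (β + 1))) * hP1
    + (tvar ^ (-((μ + 1 + r : ℕ) : ℤ)) * qint (β + 1 + r) *
        (nqb (μ + 1 + p) (μ + 1) * nqb (μ + 1) (β + 1))) * hP2a
    + (tvar ^ (-((μ + 1 + r : ℕ) : ℤ)) * qint (μ + 1 + r) *
        (nqb (μ + 1 + p) (μ + 1) * nqb (μ + 1) (β + 1) * nqb μ α * nqb (μ + r) μ)) * Hidx2
    + (tvar ^ (-((μ + 1 + r : ℕ) : ℤ)) * qint (μ + 1 + r) * nqb μ α) * hP2b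

end MainIdentity


/-- variant of the main identity when `b = 0`. -/
lemma main_id0 (μ α γ p r : ℕ) (hγ : α + γ = μ) (hc : α + r = μ + p) :
    qint r * qint ((α + 1) + (μ + 1 + r)) *
        (nqb (μ + 1 + p) (μ + 1) * nqb (μ + 1 + r) (μ + 1) * nqb (μ + 1) (α + 1))
      = (tvar ^ ((α + 1 : ℕ) : ℤ) * tvar ^ (γ : ℤ) *
            (nqb (μ + p) (μ + 1) * nqb (μ + 1) (α + 1) * nqb (μ + 1 + r) (μ + 1))
          + tvar ^ ((α + 1 : ℕ) : ℤ) * tvar ^ (-(p : ℤ)) *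
            (nqb μ (α + 1) * nqb (μ + p) μ * nqb (μ + 1 + r) (μ + 1))
          + tvar ^ (-((μ + 1 + r : ℕ) : ℤ)) * (nqb μ α * SUMT μ p r)) *
        (qint (μ + 1 + p) * qint (μ + 1 + r)) := by
  have Hu2 := qint_add (α + 1) (μ + 1 + r)
  have Hidx1 : qint r = qint (γ + p) := by rw [show r = γ + p by omega]
  have hP1 := P1lem μ α γ p hγ
  have hP2a := P2alem μ α r
  have hA7 := A7 μ p r
  linear_combination
    (qint r * (nqb (μ + 1 + p) (μ + 1) * nqb (μ + 1 + r) (μ + 1) * nqb (μ + 1) (α + 1))) * Hu2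
    + (tvar ^ ((α + 1 : ℕ) : ℤ) * qint (μ + 1 + r) *
        (nqb (μ + 1 + p) (μ + 1) * nqb (μ + 1 + r) (μ + 1) * nqb (μ + 1) (α + 1))) * Hidx1
    + (tvar ^ ((α + 1 : ℕ) : ℤ) * qint (μ + 1 + r) * nqb (μ + 1 + r) (μ + 1)) * hP1
    + (tvar ^ (-((μ + 1 + r : ℕ) : ℤ)) * qint r * nqb (μ + 1 + p) (μ + 1)) * hP2a
    + (tvar ^ (-((μ + 1 + r : ℕ) : ℤ)) * qint (μ + 1 + r) * nqb μ α) * hA7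

lemma posL_SUMT (μ p r : ℕ) : posL (SUMT μ p r) := by
  refine posL_sum fun j _ => ?_
  exact posL_mul (posL_tzpow _) (posL_mul (posL_nqb _ _) (posL_nqb _ _))

lemma qbinom_eq_nqb (n k : ℕ) (hk : k ≤ n) : qbinom (n : ℤ) (k : ℤ) = nqb n k := by
  rcases Nat.eq_zero_or_pos k with rfl | hkpos
  · norm_num [qbinom, nqb_zero]
  · have hk0 : (k : ℤ) ≠ 0 := by omega
    rw [qbinom, if_neg hk0, if_pos ⟨by positivity, by exact_mod_cast hk⟩]
    have e1 : ((n : ℤ)).toNat = n := Int.toNat_natCast n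
    have e2 : ((k : ℤ)).toNat = k := Int.toNat_natCast k
    have e3 : ((n : ℤ) - (k : ℤ)).toNat = n - k := by omega
    rw [e1, e2, e3, nqb, if_pos hk]

lemma qbinom_out {m r : ℤ} (h0 : r ≠ 0) (h1 : ¬(0 ≤ r ∧ r ≤ m)) : qbinom m r = 0 := by
  rw [qbinom, if_neg h0, if_neg h1]

/-- **Laurent positivity of the closed topological-vertex formula for the higher-genus
log Gromov–Witten generating function of dP₃ with divisor (H−E₁) + (2H−E₂−E₃).**
For integers `d₀ ≥ 1`, `d₁, d₂, d₃ ≥ 0` with `d₁ + d₂ + d₃ > d₀`, the rational function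
`([d₁][d₂+d₃]/([d₀][d₁+d₂+d₃−d₀])) B(d₃,d₀−d₁) B(d₃,d₀−d₂) B(d₀,d₃) B(d₁+d₂+d₃−d₀,d₃)`
is a Laurent polynomial in `t` with nonnegative integer coefficients. -/
theorem vertex_formula_dP3_positivity (d0 d1 d2 d3 : ℕ) (hd0 : 1 ≤ d0)
    (hsum : d0 < d1 + d2 + d3) :
    ∃ c : ℤ →₀ ℕ,
      (qint d1 * qint (d2 + d3)) / (qint d0 * qint (d1 + d2 + d3 - d0)) *
          qbinom (d3 : ℤ) ((d0 : ℤ) - d1) * qbinom (d3 : ℤ) ((d0 : ℤ) - d2) *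
          qbinom (d0 : ℤ) (d3 : ℤ) * qbinom ((d1 : ℤ) + d2 + d3 - d0) (d3 : ℤ)
        = c.sum fun i a => (a : Ft) * tvar ^ i := by
  set sN : ℕ := d1 + d2 + d3 - d0 with hsN
  have hsNpos : 1 ≤ sN := by omega
  have hcast : ((d1 : ℤ) + d2 + d3 - d0) = (sN : ℤ) := by omega
  rw [hcast]
  -- helper to conclude when the LHS is zero
  have zeroCase : ∀ x : Ft, x = 0 →
      (∃ c : ℤ →₀ ℕ, x = c.sum fun i a => (a : Ft) * tvar ^ i) := by
    intro x hx
    exact ⟨0, by simp [hx]⟩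
  -- helper to conclude from posL
  have posCase : ∀ x : Ft, posL x →
      (∃ c : ℤ →₀ ℕ, x = c.sum fun i a => (a : Ft) * tvar ^ i) := by
    intro x hx
    exact posL_to_finsupp hx
  -- Case d1 = 0
  rcases Nat.eq_zero_or_pos d1 with hd1 | hd1
  · refine zeroCase _ ?_
    rw [hd1, qint_zero]
    simp
  -- Case: first binomial out of range
  by_cases hA : d1 ≤ d0 ∧ d0 ≤ d1 + d3
  swap
  · refine zeroCase _ ?_
    have h0 : ((d0 : ℤ) - d1) ≠ 0 ∨ True := Or.inr trivial
    have : qbinom (d3 : ℤ) ((d0 : ℤ) - d1) = 0 := by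
      apply qbinom_out
      · omega
      · push_neg
        intro h
        omega
    rw [this]
    ring
  by_cases hB : d2 ≤ d0 ∧ d0 ≤ d2 + d3
  swap
  · refine zeroCase _ ?_
    have : qbinom (d3 : ℤ) ((d0 : ℤ) - d2) = 0 := by
      apply qbinom_out
      · omega
      · push_neg
        intro h
        omega
    rw [this]
    ring
  -- Case d3 = 0
  rcases Nat.eq_zero_or_pos d3 with hd3 | hd3
  · -- then d0 = d1 = d2 = sN and everything collapses to 1
    have h01 : d0 = d1 := by omega
    have h02 : d0 = d2 := by omega
    have hs0 : sN = d0 := by omega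
    refine posCase _ ?_
    have e1 : qbinom (d3 : ℤ) ((d0 : ℤ) - d1) = 1 := by
      rw [qbinom, if_pos (by omega : (d0 : ℤ) - d1 = 0)]
    have e2 : qbinom (d3 : ℤ) ((d0 : ℤ) - d2) = 1 := by
      rw [qbinom, if_pos (by omega : (d0 : ℤ) - d2 = 0)]
    have e3 : qbinom (d0 : ℤ) (d3 : ℤ) = 1 := by
      rw [hd3, qbinom]
      norm_num
    have e4 : qbinom (sN : ℤ) (d3 : ℤ) = 1 := by
      rw [hd3, qbinom]
      norm_num
    rw [e1, e2, e3, e4, hs0, ← h01, hd3, ← h02]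
    have : qint d0 * qint (d0 + 0) / (qint d0 * qint d0) = 1 := by
      rw [Nat.add_zero]
      exact div_self (mul_ne_zero (qint_ne _ (by omega)) (qint_ne _ (by omega)))
    rw [this]
    simpa using posL_one
  -- d3 ≥ 1 from here on
  by_cases hC : d3 ≤ d0
  swap
  · refine zeroCase _ ?_
    have : qbinom (d0 : ℤ) (d3 : ℤ) = 0 := by
      apply qbinom_out
      · omega
      · push_neg
        intro h
        omega
    rw [this]
    ring
  by_cases hD : d3 ≤ sN
  swap
  · refine zeroCase _ ?_
    have : qbinom (sN : ℤ) (d3 : ℤ) = 0 := by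
      apply qbinom_out
      · omega
      · push_neg
        intro h
        omega
    rw [this]
    ring
  -- interior: rewrite all binomials as nqb
  set a : ℕ := d0 - d1 with ha
  set b : ℕ := d0 - d2 with hb
  have haa : (d0 : ℤ) - d1 = (a : ℤ) := by omega
  have hbb : (d0 : ℤ) - d2 = (b : ℤ) := by omega
  have ha3 : a ≤ d3 := by omega
  have hb3 : b ≤ d3 := by omega
  rw [haa, hbb, qbinom_eq_nqb d3 a ha3, qbinom_eq_nqb d3 b hb3,
    qbinom_eq_nqb d0 d3 hC, qbinom_eq_nqb sN d3 hD]
  have hden : qint d0 * qint sN ≠ 0 :=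
    mul_ne_zero (qint_ne _ (by omega)) (qint_ne _ (by omega))
  -- case a = 0
  rcases Nat.eq_zero_or_pos a with haz | hapos
  · -- d1 = d0, sN = d2 + d3
    have h1 : d1 = d0 := by omega
    have h2 : sN = d2 + d3 := by omega
    refine posCase _ ?_
    have : qint d1 * qint (d2 + d3) / (qint d0 * qint sN) = 1 := by
      rw [h1, h2]
      exact div_self (mul_ne_zero (qint_ne _ (by omega)) (qint_ne _ (by omega)))
    rw [this, one_mul, haz, nqb_zero, one_mul]
    exact posL_mul (posL_mul (posL_nqb _ _) (posL_nqb _ _)) (posL_nqb _ _)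
  -- a ≥ 1
  obtain ⟨μ, hμ⟩ : ∃ μ, d3 = μ + 1 := ⟨d3 - 1, by omega⟩
  obtain ⟨α, hα⟩ : ∃ α, a = α + 1 := ⟨a - 1, by omega⟩
  set p : ℕ := d0 - d3 with hp
  set r : ℕ := sN - d3 with hr
  set γ : ℕ := μ - α with hγdef
  have hαμ : α + γ = μ := by omega
  have hrel : a + b + r = d3 + p := by omega
  have hd0e : d0 = μ + 1 + p := by omega
  have hse : sN = μ + 1 + r := by omega
  have hu2e : d2 + d3 = (α + 1) + (μ + 1 + r) := by omega
  -- case b = 0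
  rcases Nat.eq_zero_or_pos b with hbz | hbpos
  · have hd1e : d1 = r := by omega
    have key := main_id0 μ α γ p r hαμ (by omega)
    refine posCase _ ?_
    have hgoal : qint d1 * qint (d2 + d3) / (qint d0 * qint sN) * nqb d3 a * nqb d3 b *
        nqb d0 d3 * nqb sN d3
        = (tvar ^ ((α + 1 : ℕ) : ℤ) * tvar ^ (γ : ℤ) *
            (nqb (μ + p) (μ + 1) * nqb (μ + 1) (α + 1) * nqb (μ + 1 + r) (μ + 1))
          + tvar ^ ((α + 1 : ℕ) : ℤ) * tvar ^ (-(p : ℤ)) *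
            (nqb μ (α + 1) * nqb (μ + p) μ * nqb (μ + 1 + r) (μ + 1))
          + tvar ^ (-((μ + 1 + r : ℕ) : ℤ)) * (nqb μ α * SUMT μ p r)) := by
      rw [div_mul_eq_mul_div, div_mul_eq_mul_div, div_mul_eq_mul_div, div_mul_eq_mul_div,
        div_eq_iff hden]
      rw [hd1e, hu2e, hbz, nqb_zero, hμ, hα, hd0e, hse]
      linear_combination key
    rw [hgoal]
    refine posL_add (posL_add ?_ ?_) ?_ <;>
      [skip; skip; exact posL_mul (posL_tzpow _)
        (posL_mul (posL_nqb _ _) (posL_SUMT _ _ _))]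
    · exact posL_mul (posL_mul (posL_tzpow _) (posL_tzpow _))
        (posL_mul (posL_mul (posL_nqb _ _) (posL_nqb _ _)) (posL_nqb _ _))
    · exact posL_mul (posL_mul (posL_tzpow _) (posL_tzpow _))
        (posL_mul (posL_mul (posL_nqb _ _) (posL_nqb _ _)) (posL_nqb _ _))
  -- a ≥ 1, b ≥ 1
  obtain ⟨β, hβ⟩ : ∃ β, b = β + 1 := ⟨b - 1, by omega⟩
  have hd1e : d1 = β + 1 + r := by omega
  have key := main_id μ α β γ p r hαμ (by omega)
  refine posCase _ ?_
  have hgoal : qint d1 * qint (d2 + d3) / (qint d0 * qint sN) * nqb d3 a * nqb d3 b *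
      nqb d0 d3 * nqb sN d3
      = (tvar ^ ((α + 1 : ℕ) : ℤ) * tvar ^ (γ : ℤ) *
            (nqb (μ + p) (μ + 1) * nqb (μ + 1) (α + 1) * nqb (μ + 1 + r) (μ + 1) *
              nqb (μ + 1) (β + 1))
          + tvar ^ ((α + 1 : ℕ) : ℤ) * tvar ^ (-(p : ℤ)) *
            (nqb μ (α + 1) * nqb (μ + p) μ * nqb (μ + 1 + r) (μ + 1) * nqb (μ + 1) (β + 1))
          + tvar ^ (-((μ + 1 + r : ℕ) : ℤ)) * tvar ^ (r : ℤ) *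
            (nqb μ β * nqb (μ + p) μ * nqb μ α * nqb (μ + r) μ)
          + tvar ^ (-((μ + 1 + r : ℕ) : ℤ)) * tvar ^ (-((β + 1 : ℕ) : ℤ)) *
            (nqb μ α * nqb (μ + 1) (β + 1) * SUMT μ p r)) := by
    rw [div_mul_eq_mul_div, div_mul_eq_mul_div, div_mul_eq_mul_div, div_mul_eq_mul_div,
      div_eq_iff hden]
    rw [hd1e, hu2e, hμ, hα, hβ, hd0e, hse]
    linear_combination key
  rw [hgoal]
  refine posL_add (posL_add (posL_add ?_ ?_) ?_) ?_
  · exact posL_mul (posL_mul (posL_tzpow _) (posL_tzpow _))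
      (posL_mul (posL_mul (posL_mul (posL_nqb _ _) (posL_nqb _ _)) (posL_nqb _ _)) (posL_nqb _ _))
  · exact posL_mul (posL_mul (posL_tzpow _) (posL_tzpow _))
      (posL_mul (posL_mul (posL_mul (posL_nqb _ _) (posL_nqb _ _)) (posL_nqb _ _)) (posL_nqb _ _))
  · exact posL_mul (posL_mul (posL_tzpow _) (posL_tzpow _))
      (posL_mul (posL_mul (posL_mul (posL_nqb _ _) (posL_nqb _ _)) (posL_nqb _ _)) (posL_nqb _ _))
  · exact posL_mul (posL_mul (posL_tzpow _) (posL_tzpow _))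
      (posL_mul (posL_mul (posL_nqb _ _) (posL_nqb _ _)) (posL_SUMT _ _ _))

end
end
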